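/- Let L be a {Φ∪Σ,Δ}-field, fix ∂ = ∂_j ∈ Δ and σ_i, σ_k ∈ Σ, and let B ∈ M_n(L), C ∈ GL_n(L), D ∈ GL_n(L) satisfy σ_k(B)·C = ∂(C) + C·B and σ_i(B)·D = ∂(D) + D·B. Then the matrix M := σ_k(D)·C·D^{-1}·σ_i(C)^{-1} satisfies ∂(M) = [σ_i(σ_k(B)), M], i.e., σ_i(σ_k(B))·M − M·σ_i(σ_k(B)) = ∂(M). -/

import Mathlib

/-!
Call `X` a gauge transformation from `B` to `A` when `∂X = A X - X B`, i.e. `X` carries solutions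
of `∂Y = B Y` to solutions of `∂Z = A Z`. Such transformations compose, invertible ones can be
reversed, and automorphisms commuting with `∂` transport them. The hypotheses say that `C` goes
from `B` to `σ_k B` and `D` from `B` to `σ_i B`, so
`M = σ_k(D) · C · D⁻¹ · σ_i(C)⁻¹` goes from `σ_i σ_k B` through `σ_i B`, `B`, `σ_k B` to
`σ_k σ_i B = σ_i σ_k B`; a gauge transformation from `A` to itself is exactly `∂M = [A, M]`.
-/

/-- A `{Φ∪Σ,Δ}`-field structure on a field `L`: commuting automorphisms
`φ_1,…,φ_q` and `σ_1,…,σ_r` together with derivations `∂_1,…,∂_m`, all of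
which pairwise commute. -/
structure PhiSigmaDeltaField (q r m : ℕ) (L : Type*) [Field L] where
  φ : Fin q → L ≃+* L
  σ : Fin r → L ≃+* L
  der : Fin m → L → L
  der_add : ∀ i x y, der i (x + y) = der i x + der i y
  der_mul : ∀ i x y, der i (x * y) = der i x * y + x * der i y
  comm_φφ : ∀ i j x, φ i (φ j x) = φ j (φ i x)
  comm_φσ : ∀ i j x, φ i (σ j x) = σ j (φ i x)
  comm_σσ : ∀ i j x, σ i (σ j x) = σ j (σ i x)
  comm_φder : ∀ i j x, φ i (der j x) = der j (φ i x)
  comm_σder : ∀ i j x, σ i (der j x) = der j (σ i x)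
  comm_derder : ∀ i j x, der i (der j x) = der j (der i x)

namespace Matrix

variable {ι R : Type*} [CommRing R] (δ : Derivation ℤ R R)

theorem map_derivation_one [DecidableEq ι] : (1 : Matrix ι ι R).map δ = 0 := by
  rw [← diagonal_one, diagonal_map δ.map_zero, Derivation.map_one_eq_zero, diagonal_zero]

variable [Fintype ι]

theorem map_derivation_mul {l o : Type*} (X : Matrix l ι R) (Y : Matrix ι o R) :
    (X * Y).map δ = X.map δ * Y + X * Y.map δ := by
  ext a b
  simp only [map_apply, mul_apply, add_apply, map_sum, Derivation.leibniz, smul_eq_mul,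
    ← Finset.sum_add_distrib]
  exact Finset.sum_congr rfl fun c _ => by ring

theorem map_derivation_nonsing_inv [DecidableEq ι] {X : Matrix ι ι R} (hX : IsUnit X) :
    X⁻¹.map δ = -(X⁻¹ * X.map δ * X⁻¹) := by
  have hXdet : IsUnit X.det := (isUnit_iff_isUnit_det X).mp hX
  have h := congrArg (X⁻¹ * ·) (map_derivation_mul δ X X⁻¹)
  simp only [mul_nonsing_inv X hXdet, map_derivation_one, mul_zero, mul_add, ← Matrix.mul_assoc,
    nonsing_inv_mul X hXdet, Matrix.one_mul] at h
  exact eq_neg_of_add_eq_zero_right h.symm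

def IsGaugeTransform (B A X : Matrix ι ι R) : Prop :=
  X.map δ = A * X - X * B

namespace IsGaugeTransform

variable {δ} {A B C X Y : Matrix ι ι R}

theorem mul (hX : IsGaugeTransform δ B A X) (hY : IsGaugeTransform δ C B Y) :
    IsGaugeTransform δ C A (X * Y) := by
  unfold IsGaugeTransform at *
  rw [map_derivation_mul, hX, hY]
  noncomm_ring

theorem nonsing_inv [DecidableEq ι] (hX : IsGaugeTransform δ B A X) (hXu : IsUnit X) :
    IsGaugeTransform δ A B X⁻¹ := by
  have hXdet : IsUnit X.det := (isUnit_iff_isUnit_det X).mp hXu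
  unfold IsGaugeTransform at *
  rw [map_derivation_nonsing_inv δ hXu, hX]
  calc -(X⁻¹ * (A * X - X * B) * X⁻¹)
      = (X⁻¹ * X) * (B * X⁻¹) - X⁻¹ * A * (X * X⁻¹) := by noncomm_ring
    _ = B * X⁻¹ - X⁻¹ * A := by
      rw [nonsing_inv_mul X hXdet, mul_nonsing_inv X hXdet, Matrix.one_mul, Matrix.mul_one]

theorem map (hX : IsGaugeTransform δ B A X) (σ : R →+* R) (hσ : ∀ x, σ (δ x) = δ (σ x)) :
    IsGaugeTransform δ (B.map σ) (A.map σ) (X.map σ) := by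
  have hcomm : (X.map δ).map σ = (X.map σ).map δ := by
    ext a b
    exact hσ (X a b)
  unfold IsGaugeTransform at *
  rw [← hcomm, hX, Matrix.map_sub σ (map_sub σ), Matrix.map_mul, Matrix.map_mul]

end IsGaugeTransform

end Matrix

namespace PhiSigmaDeltaField

variable {q r m : ℕ} {L : Type*} [Field L] (F : PhiSigmaDeltaField q r m L)

def derivation (j : Fin m) : Derivation ℤ L L :=
  Derivation.mk' (AddMonoidHom.mk' (F.der j) (F.der_add j)).toIntLinearMap fun a b => by
    simp only [AddMonoidHom.coe_toIntLinearMap, AddMonoidHom.mk'_apply, F.der_mul, smul_eq_mul]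
    ring

theorem map_σ_map_σ_comm {n : ℕ} (i k : Fin r) (B : Matrix (Fin n) (Fin n) L) :
    (B.map ⇑(F.σ k)).map ⇑(F.σ i) = (B.map ⇑(F.σ i)).map ⇑(F.σ k) := by
  ext a b
  exact F.comm_σσ i k (B a b)

end PhiSigmaDeltaField

open Matrix PhiSigmaDeltaField in
theorem statement9_general {n q r m : ℕ} {L : Type*} [Field L]
    (F : PhiSigmaDeltaField q r m L) (j : Fin m) (i k : Fin r)
    (B C D : Matrix (Fin n) (Fin n) L)
    (hC : IsUnit C) (hD : IsUnit D)
    (hCeq : B.map ⇑(F.σ k) * C = C.map (F.der j) + C * B)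
    (hDeq : B.map ⇑(F.σ i) * D = D.map (F.der j) + D * B) :
    (D.map ⇑(F.σ k) * C * D⁻¹ * (C.map ⇑(F.σ i))⁻¹).map (F.der j) =
      (B.map ⇑(F.σ k)).map ⇑(F.σ i) *
          (D.map ⇑(F.σ k) * C * D⁻¹ * (C.map ⇑(F.σ i))⁻¹) -
        (D.map ⇑(F.σ k) * C * D⁻¹ * (C.map ⇑(F.σ i))⁻¹) *
          (B.map ⇑(F.σ k)).map ⇑(F.σ i) := by
  set δ := F.derivation j
  have hσ (s : Fin r) (x : L) : F.σ s (δ x) = δ (F.σ s x) := F.comm_σder s j x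
  have hCgauge : IsGaugeTransform δ B (B.map (F.σ k)) C := eq_sub_of_add_eq hCeq.symm
  have hDgauge : IsGaugeTransform δ B (B.map (F.σ i)) D := eq_sub_of_add_eq hDeq.symm
  have hσkD : IsGaugeTransform δ (B.map (F.σ k)) ((B.map (F.σ i)).map (F.σ k)) (D.map (F.σ k)) :=
    hDgauge.map (F.σ k : L →+* L) (hσ k)
  have hσiC : IsGaugeTransform δ (B.map (F.σ i)) ((B.map (F.σ k)).map (F.σ i)) (C.map (F.σ i)) :=
    hCgauge.map (F.σ i : L →+* L) (hσ i)
  have hσiCu : IsUnit (C.map (F.σ i)) := hC.map (RingHom.mapMatrix (F.σ i : L →+* L))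
  rw [← F.map_σ_map_σ_comm] at hσkD
  exact ((hσkD.mul hCgauge).mul (hDgauge.nonsing_inv hD)).mul (hσiC.nonsing_inv hσiCu)

theorem statement9 {n q r m : ℕ} (hn : 1 ≤ n) {L : Type*} [Field L] [CharZero L]
    (F : PhiSigmaDeltaField q r m L) (j : Fin m) (i k : Fin r)
    (B C D : Matrix (Fin n) (Fin n) L)
    (hC : IsUnit C) (hD : IsUnit D)
    (hCeq : B.map ⇑(F.σ k) * C = C.map (F.der j) + C * B)
    (hDeq : B.map ⇑(F.σ i) * D = D.map (F.der j) + D * B) :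
    (D.map ⇑(F.σ k) * C * D⁻¹ * (C.map ⇑(F.σ i))⁻¹).map (F.der j) =
      (B.map ⇑(F.σ k)).map ⇑(F.σ i) *
          (D.map ⇑(F.σ k) * C * D⁻¹ * (C.map ⇑(F.σ i))⁻¹) -
        (D.map ⇑(F.σ k) * C * D⁻¹ * (C.map ⇑(F.σ i))⁻¹) *
          (B.map ⇑(F.σ k)).map ⇑(F.σ i) :=
  statement9_general F j i k B C D hC hD hCeq hDeq
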